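/- arXiv:1407.6652 — 4 statements merged into one kernel-verified Lean document; each statement's English description precedes it below -/
import Mathlib

section
/- Assume the Hill setup. Then Δ(ν) − 2·cos(T·√(−ν)) → 0 as ν → −∞. -/
open Real Filter Set

noncomputable section

/-- The (Floquet) spectrum of the linearized Klein--Gordon spectral problem
`(c^2-1) w'' - 2 c lam w' + (lam^2 + Q z) w = 0`: the set of `lam : ℂ` for which
there is a nontrivial bounded solution `w : ℝ → ℂ`. -/
def KGSpectrum (c : ℝ) (Q : ℝ → ℝ) : Set ℂ :=
  {lam : ℂ | ∃ w wd wdd : ℝ → ℂ,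
    (∀ z, HasDerivAt w (wd z) z) ∧ (∀ z, HasDerivAt wd (wdd z) z) ∧
    (∀ z : ℝ, ((c : ℂ) ^ 2 - 1) * wdd z - 2 * (c : ℂ) * lam * wd z
        + (lam ^ 2 + (Q z : ℂ)) * w z = 0) ∧
    (∃ z, w z ≠ 0) ∧ (∃ M : ℝ, ∀ z, ‖w z‖ ≤ M)}

/-- The wave exhibits a dynamical Hamiltonian–Hopf instability at `lam` if every
neighborhood of `lam` contains a point of the spectrum that is not purely imaginary. -/
def HasDHHInstabilityAt (c : ℝ) (Q : ℝ → ℝ) (lam : ℂ) : Prop :=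
  ∀ U ∈ nhds lam, ∃ μ ∈ KGSpectrum c Q, μ ∈ U ∧ μ.re ≠ 0

/-- `y1, y2` (with derivatives `y1d, y2d`) are the canonical fundamental solutions of
Hill's equation `y'' + P y = ν y` with `y1(0)=1, y1'(0)=0, y2(0)=0, y2'(0)=1`,
for every value of the spectral parameter `ν`. -/
def IsHillFundamental (P : ℝ → ℝ) (y1 y1d y2 y2d : ℝ → ℝ → ℝ) : Prop :=
  ∀ ν : ℝ,
    (∀ z, HasDerivAt (y1 ν) (y1d ν z) z) ∧
    (∀ z, HasDerivAt (y1d ν) (ν * y1 ν z - P z * y1 ν z) z) ∧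
    (∀ z, HasDerivAt (y2 ν) (y2d ν z) z) ∧
    (∀ z, HasDerivAt (y2d ν) (ν * y2 ν z - P z * y2 ν z) z) ∧
    y1 ν 0 = 1 ∧ y1d ν 0 = 0 ∧ y2 ν 0 = 0 ∧ y2d ν 0 = 1

/-!
For `ν = -ω²` Hill's equation reads `y'' + ω² y = -P y`, a harmonic oscillator with a bounded
perturbation `|P| ≤ M` on `[0, T]`. Along a solution the oscillator energy `ω² y² + y'²` grows at
most like `e^{M z / ω}` (Grönwall). The difference between `y` and the free oscillator with the
same Cauchy data starts with zero energy and is forced by `-P y = O(E(0)^{1/2} / ω)`, so by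
Grönwall again its energy at `T` is `O(E(0) / ω²)`. For `y₁` (with `E(0) = ω²`) this gives
`y₁(T) = cos(ωT) + O(1/ω)`, and for `y₂` (with `E(0) = 1`) it gives `y₂'(T) = cos(ωT) + O(1/ω)`.
-/

theorem le_gronwallBound_of_hasDerivAt {f f' : ℝ → ℝ} {δ K ε a b : ℝ}
    (hf : ∀ x, HasDerivAt f (f' x) x) (ha : f a ≤ δ)
    (bound : ∀ x ∈ Ico a b, f' x ≤ K * f x + ε) :
    ∀ x ∈ Icc a b, f x ≤ gronwallBound δ K ε (x - a) :=
  le_gronwallBound_of_liminf_deriv_right_le (fun x _ => (hf x).continuousAt.continuousWithinAt)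
    (fun x _ _ hr => (hf x).hasDerivWithinAt.liminf_right_slope_le hr) ha bound

theorem gronwallBound_zero_mul (K c x : ℝ) :
    gronwallBound 0 K (K * c) x = c * (exp (K * x) - 1) := by
  rcases eq_or_ne K 0 with rfl | hK
  · simp [gronwallBound_K0]
  · rw [gronwallBound_of_K_ne_0 hK]
    field_simp
    ring

theorem neg_two_mul_mul_mul_le {p a b M : ℝ} (hp : |p| ≤ M) :
    -(2 * p * a * b) ≤ 2 * M * |a| * |b| :=
  calc -(2 * p * a * b) ≤ |2 * p * a * b| := neg_le_abs _
    _ = 2 * |p| * |a| * |b| := by simp only [abs_mul, abs_two]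
    _ ≤ 2 * M * |a| * |b| := by gcongr

def oscEnergy (ω : ℝ) (u u' : ℝ → ℝ) (z : ℝ) : ℝ :=
  ω ^ 2 * u z ^ 2 + u' z ^ 2

section HillOscillator

variable {ω M T : ℝ} {P u u' u'' y y' f f' : ℝ → ℝ}

theorem oscEnergy_nonneg (ω : ℝ) (u u' : ℝ → ℝ) (z : ℝ) : 0 ≤ oscEnergy ω u u' z := by
  unfold oscEnergy
  positivity

theorem hasDerivAt_oscEnergy (hu : ∀ z, HasDerivAt u (u' z) z)
    (hu' : ∀ z, HasDerivAt u' (u'' z) z) (z : ℝ) :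
    HasDerivAt (oscEnergy ω u u') (2 * (u'' z + ω ^ 2 * u z) * u' z) z := by
  have h : HasDerivAt (oscEnergy ω u u') _ z :=
    (((hu z).fun_pow 2).const_mul (ω ^ 2)).add ((hu' z).fun_pow 2)
  convert h using 1
  push_cast
  ring

variable (hP : ∀ z ∈ Icc 0 T, |P z| ≤ M) (hy : ∀ z, HasDerivAt y (y' z) z)
  (hy' : ∀ z, HasDerivAt y' (-ω ^ 2 * y z - P z * y z) z)
include hP hy hy'

/-- By AM-GM, `|2 P y y'| ≤ (M / ω) (ω² y² + y'²)`, so Grönwall applies with rate `M / ω`. -/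
theorem oscEnergy_le_of_hill (hω : 0 < ω) :
    ∀ z ∈ Icc 0 T, oscEnergy ω y y' z ≤ oscEnergy ω y y' 0 * exp (M / ω * z) := by
  have bound : ∀ x ∈ Ico 0 T, 2 * (-ω ^ 2 * y x - P x * y x + ω ^ 2 * y x) * y' x ≤
      M / ω * oscEnergy ω y y' x + 0 := by
    intro x hx
    have hM : 0 ≤ M := (abs_nonneg _).trans (hP x (Ico_subset_Icc_self hx))
    calc 2 * (-ω ^ 2 * y x - P x * y x + ω ^ 2 * y x) * y' x = -(2 * P x * y x * y' x) := by ring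
      _ ≤ 2 * M * |y x| * |y' x| := neg_two_mul_mul_mul_le (hP x (Ico_subset_Icc_self hx))
      _ = M / ω * (2 * (ω * |y x|) * |y' x|) := by field_simp
      _ ≤ M / ω * ((ω * |y x|) ^ 2 + |y' x| ^ 2) := by gcongr; exact two_mul_le_add_sq _ _
      _ = M / ω * oscEnergy ω y y' x + 0 := by simp only [oscEnergy, mul_pow, sq_abs, add_zero]
  intro z hz
  simpa [gronwallBound_ε0] using
    le_gronwallBound_of_hasDerivAt (hasDerivAt_oscEnergy hy hy') le_rfl bound z hz

/-- `g = y - f` solves `g'' + ω² g = -P y` with `g(0) = g'(0) = 0`, and the previous lemma bounds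
the forcing by `y² ≤ E(0) e^{MT} / ω²`. -/
theorem oscEnergy_sub_le_of_hill (hω : 1 ≤ ω) (hT : 0 ≤ T) (hf : ∀ z, HasDerivAt f (f' z) z)
    (hf' : ∀ z, HasDerivAt f' (-ω ^ 2 * f z) z) (h0 : f 0 = y 0) (h0' : f' 0 = y' 0) :
    oscEnergy ω (y - f) (y' - f') T ≤ oscEnergy ω y y' 0 * (exp (M * T) / ω) ^ 2 := by
  have hω0 : 0 < ω := one_pos.trans_le hω
  have hM : 0 ≤ M := (abs_nonneg _).trans (hP 0 ⟨le_rfl, hT⟩)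
  set c := oscEnergy ω y y' 0 * exp (M * T) / ω ^ 2
  have hy_sq : ∀ x ∈ Icc 0 T, y x ^ 2 ≤ c := by
    intro x hx
    have hexp : M / ω * x ≤ M * T := by
      gcongr
      · exact hx.1
      · exact div_le_self hM hω
      · exact hx.2
    rw [le_div_iff₀ (by positivity), mul_comm]
    calc ω ^ 2 * y x ^ 2 ≤ oscEnergy ω y y' x := le_add_of_nonneg_right (sq_nonneg _)
      _ ≤ oscEnergy ω y y' 0 * exp (M / ω * x) := oscEnergy_le_of_hill hP hy hy' hω0 x hx
      _ ≤ oscEnergy ω y y' 0 * exp (M * T) := by gcongr; exact oscEnergy_nonneg ω y y' 0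
  have bound : ∀ x ∈ Ico 0 T,
      2 * (-ω ^ 2 * y x - P x * y x - -ω ^ 2 * f x + ω ^ 2 * (y - f) x) * (y' - f') x ≤
        M * oscEnergy ω (y - f) (y' - f') x + M * c := by
    intro x hx
    have hyx := hy_sq x (Ico_subset_Icc_self hx)
    calc 2 * (-ω ^ 2 * y x - P x * y x - -ω ^ 2 * f x + ω ^ 2 * (y - f) x) * (y' - f') x
        = -(2 * P x * y x * (y' - f') x) := by simp only [Pi.sub_apply]; ring
      _ ≤ 2 * M * |y x| * |(y' - f') x| := neg_two_mul_mul_mul_le (hP x (Ico_subset_Icc_self hx))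
      _ = M * (2 * |y x| * |(y' - f') x|) := by ring
      _ ≤ M * (|y x| ^ 2 + |(y' - f') x| ^ 2) := by gcongr; exact two_mul_le_add_sq _ _
      _ ≤ M * oscEnergy ω (y - f) (y' - f') x + M * c := by
        rw [sq_abs, sq_abs, oscEnergy, ← mul_add]
        have : 0 ≤ ω ^ 2 * (y - f) x ^ 2 := by positivity
        exact mul_le_mul_of_nonneg_left (by linarith) hM
  have hgronwall := le_gronwallBound_of_hasDerivAt (δ := 0)
    (hasDerivAt_oscEnergy (fun z => (hy z).sub (hf z)) (fun z => (hy' z).sub (hf' z)))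
    (by simp [oscEnergy, h0, h0']) bound T ⟨hT, le_rfl⟩
  rw [sub_zero, gronwallBound_zero_mul] at hgronwall
  calc oscEnergy ω (y - f) (y' - f') T ≤ c * (exp (M * T) - 1) := hgronwall
    _ ≤ c * exp (M * T) := by
      have := oscEnergy_nonneg ω y y' 0
      gcongr
      linarith
    _ = oscEnergy ω y y' 0 * (exp (M * T) / ω) ^ 2 := by ring

end HillOscillator

theorem hasDerivAt_cos_mul (ω z : ℝ) :
    HasDerivAt (fun z => cos (ω * z)) (-ω * sin (ω * z)) z := by
  simpa [mul_comm] using ((hasDerivAt_id z).const_mul ω).cos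

theorem hasDerivAt_sin_mul (ω z : ℝ) :
    HasDerivAt (fun z => sin (ω * z)) (ω * cos (ω * z)) z := by
  simpa [mul_comm] using ((hasDerivAt_id z).const_mul ω).sin

namespace IsHillFundamental

variable {P : ℝ → ℝ} {y1 y1d y2 y2d : ℝ → ℝ → ℝ} {ω M T : ℝ}

theorem abs_y1_sub_cos_le (h : IsHillFundamental P y1 y1d y2 y2d) (hω : 1 ≤ ω) (hT : 0 ≤ T)
    (hP : ∀ z ∈ Icc 0 T, |P z| ≤ M) :
    |y1 (-ω ^ 2) T - cos (ω * T)| ≤ exp (M * T) / ω := by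
  obtain ⟨hy, hy', -, -, h0, h0', -, -⟩ := h (-ω ^ 2)
  have hω0 : 0 < ω := one_pos.trans_le hω
  have hsin' (z : ℝ) : HasDerivAt (fun z => -ω * sin (ω * z)) (-ω ^ 2 * cos (ω * z)) z :=
    ((hasDerivAt_sin_mul ω z).const_mul (-ω)).congr_deriv (by ring)
  have hE := oscEnergy_sub_le_of_hill hP hy hy' hω hT (hasDerivAt_cos_mul ω) hsin'
    (by simp [h0]) (by simp [h0'])
  simp only [oscEnergy, Pi.sub_apply, h0, h0'] at hE
  refine abs_le_of_sq_le_sq ?_ (by positivity)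
  refine le_of_mul_le_mul_left ?_ (by positivity : 0 < ω ^ 2)
  nlinarith [sq_nonneg (y1d (-ω ^ 2) T - -ω * sin (ω * T))]

theorem abs_y2d_sub_cos_le (h : IsHillFundamental P y1 y1d y2 y2d) (hω : 1 ≤ ω) (hT : 0 ≤ T)
    (hP : ∀ z ∈ Icc 0 T, |P z| ≤ M) :
    |y2d (-ω ^ 2) T - cos (ω * T)| ≤ exp (M * T) / ω := by
  obtain ⟨-, -, hy, hy', -, -, h0, h0'⟩ := h (-ω ^ 2)
  have hω0 : 0 < ω := one_pos.trans_le hω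
  have hsin (z : ℝ) : HasDerivAt (fun z => sin (ω * z) / ω) (cos (ω * z)) z :=
    ((hasDerivAt_sin_mul ω z).div_const ω).congr_deriv (by field_simp)
  have hcos' (z : ℝ) : HasDerivAt (fun z => cos (ω * z)) (-ω ^ 2 * (sin (ω * z) / ω)) z :=
    (hasDerivAt_cos_mul ω z).congr_deriv (by field_simp)
  have hE := oscEnergy_sub_le_of_hill hP hy hy' hω hT hsin hcos' (by simp [h0]) (by simp [h0'])
  simp only [oscEnergy, Pi.sub_apply, h0, h0'] at hE
  refine abs_le_of_sq_le_sq ?_ (by positivity)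
  nlinarith [sq_nonneg (ω * (y2 (-ω ^ 2) T - sin (ω * T) / ω))]

end IsHillFundamental

theorem hill_discriminant_asymptotics_general
    (T : ℝ) (hT : 0 < T)
    (P : ℝ → ℝ) (hPcont : Continuous P)
    (y1 y1d y2 y2d : ℝ → ℝ → ℝ)
    (hfund : IsHillFundamental P y1 y1d y2 y2d)
    (Δ : ℝ → ℝ) (hΔ : Δ = fun ν => y1 ν T + y2d ν T)
 :
    Filter.Tendsto (fun ν : ℝ => Δ ν - 2 * Real.cos (T * Real.sqrt (-ν)))
      Filter.atBot (nhds 0) := by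
  obtain ⟨M, hP⟩ : ∃ M, ∀ z ∈ Icc 0 T, |P z| ≤ M :=
    isCompact_Icc.exists_bound_of_continuousOn hPcont.continuousOn
  have key (ν : ℝ) (hν : ν ≤ -1) :
      ‖Δ ν - 2 * cos (T * √(-ν))‖ ≤ 2 * exp (M * T) / √(-ν) := by
    have hω : 1 ≤ √(-ν) := one_le_sqrt.2 (by linarith)
    have hν : -√(-ν) ^ 2 = ν := by rw [sq_sqrt (by linarith), neg_neg]
    have h1 := hfund.abs_y1_sub_cos_le hω hT.le hP
    have h2 := hfund.abs_y2d_sub_cos_le hω hT.le hP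
    rw [hν] at h1 h2
    rw [hΔ, norm_eq_abs, mul_comm T]
    calc |y1 ν T + y2d ν T - 2 * cos (√(-ν) * T)|
        = |(y1 ν T - cos (√(-ν) * T)) + (y2d ν T - cos (√(-ν) * T))| := by ring_nf
      _ ≤ |y1 ν T - cos (√(-ν) * T)| + |y2d ν T - cos (√(-ν) * T)| := abs_add_le _ _
      _ ≤ 2 * exp (M * T) / √(-ν) := by rw [mul_div_assoc]; linarith
  exact squeeze_zero_norm' (eventually_atBot.2 ⟨-1, key⟩)
    (tendsto_const_nhds.div_atTop (tendsto_sqrt_atTop.comp tendsto_neg_atBot_atTop))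

theorem hill_discriminant_asymptotics
    (T : ℝ) (hT : 0 < T)
    (P : ℝ → ℝ) (hPcont : Continuous P) (hPper : ∀ z, P (z + T) = P z)
    (y1 y1d y2 y2d : ℝ → ℝ → ℝ)
    (hfund : IsHillFundamental P y1 y1d y2 y2d)
    (Δ : ℝ → ℝ) (hΔ : Δ = fun ν => y1 ν T + y2d ν T)
 :
    Filter.Tendsto (fun ν : ℝ => Δ ν - 2 * Real.cos (T * Real.sqrt (-ν)))
      Filter.atBot (nhds 0) :=
  hill_discriminant_asymptotics_general T hT P hPcont y1 y1d y2 y2d hfund Δ hΔ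
end
end

section
/- Assume the Hill setup. Then, as ν → −∞, the canonical solutions satisfy the following uniform WKB-type asymptotics on [0,T]: sup_{0 ≤ z ≤ T} |y₁(z;ν) − cos(√(−ν)·z)| → 0, sup_{0 ≤ z ≤ T} |√(−ν)·y₂(z;ν) − sin(√(−ν)·z)| → 0, sup_{0 ≤ z ≤ T} |y₁'(z;ν)/√(−ν) + sin(√(−ν)·z)| → 0, and sup_{0 ≤ z ≤ T} |y₂'(z;ν) − cos(√(−ν)·z)| → 0, where y₁', y₂' denote derivatives with respect to z. -/
open Real Filter Set

noncomputable section

/-! For `ν < 0` put `ω = √(-ν)` and read Hill's equation as the forced oscillator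
`y'' + ω² y = -P y`. The complex amplitude `A = (y + i y'/ω) e^{iωz}` is constant for the free
oscillator; here `A' = -i (P y / ω) e^{iωz}`, so `‖A'‖ ≤ (M/ω) ‖A‖` with `M ≥ sup_{[0,T]} |P|`.
Grönwall bounds `‖A z‖` by `‖A 0‖ e^{Mz/ω}`, and then the mean value inequality gives
`‖A z - A 0‖ ≤ (M/ω) ‖A 0‖ e^{MT/ω} T = O(1/ω)` uniformly on `[0, T]`. Rotating back by
`e^{-iωz}`, the real and imaginary parts of `A z - A 0` are exactly the deviations of `y` and
`y'/ω` from the free oscillation with the same initial data. -/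

open Complex (I)
open scoped Complex Topology

def complexAmplitude (ω : ℝ) (y yd : ℝ → ℝ) (z : ℝ) : ℂ :=
  (y z + (yd z / ω : ℝ) * I) * cexp ((ω * z : ℝ) * I)

section ForcedOscillator

variable {ω M T : ℝ} {y yd f : ℝ → ℝ}

theorem hasDerivAt_complexAmplitude {z : ℝ} (hω : ω ≠ 0) (hy : HasDerivAt y (yd z) z)
    (hyd : HasDerivAt yd (-ω ^ 2 * y z + f z) z) :
    HasDerivAt (complexAmplitude ω y yd) ((f z / ω : ℝ) * I * cexp ((ω * z : ℝ) * I)) z := by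
  have hphase : HasDerivAt (fun t : ℝ => ((ω * t : ℝ) : ℂ) * I) (ω * I) z := by
    simpa using ((hasDerivAt_id z).const_mul ω).ofReal_comp.mul_const I
  have := (hy.ofReal_comp.add ((hyd.div_const ω).ofReal_comp.mul_const I)).mul hphase.cexp
  refine this.congr_deriv ?_
  have hω' : (ω : ℂ) ≠ 0 := by exact_mod_cast hω
  simp only [Pi.add_apply]
  push_cast
  field_simp
  linear_combination (ω : ℂ) * yd z * Complex.I_sq

theorem abs_le_norm_complexAmplitude (z : ℝ) : |y z| ≤ ‖complexAmplitude ω y yd z‖ := by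
  rw [complexAmplitude, norm_mul, Complex.norm_exp_ofReal_mul_I, mul_one]
  simpa using Complex.abs_re_le_norm ((y z : ℂ) + (yd z / ω : ℝ) * I)

theorem complexAmplitude_zero : complexAmplitude ω y yd 0 = y 0 + (yd 0 / ω : ℝ) * I := by
  simp [complexAmplitude]

theorem complexAmplitude_sub_mul_exp (z : ℝ) :
    (complexAmplitude ω y yd z - complexAmplitude ω y yd 0) * cexp (-((ω * z : ℝ) * I)) =
      ((y z - (y 0 * cos (ω * z) + yd 0 / ω * sin (ω * z)) : ℝ) : ℂ) +
        ((yd z / ω - (yd 0 / ω * cos (ω * z) - y 0 * sin (ω * z)) : ℝ) : ℂ) * I := by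
  rw [sub_mul, complexAmplitude, mul_assoc, ← Complex.exp_add, add_neg_cancel, Complex.exp_zero,
    mul_one, complexAmplitude_zero, ← neg_mul, ← Complex.ofReal_neg, Complex.exp_mul_I,
    ← Complex.ofReal_cos, ← Complex.ofReal_sin]
  apply Complex.ext <;> simp <;> ring

theorem norm_deriv_complexAmplitude_le {z : ℝ} (hω : 0 < ω) (hM : 0 ≤ M)
    (hf : |f z| ≤ M * |y z|) :
    ‖((f z / ω : ℝ) : ℂ) * I * cexp ((ω * z : ℝ) * I)‖ ≤ M / ω * ‖complexAmplitude ω y yd z‖ := by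
  rw [norm_mul, norm_mul, Complex.norm_exp_ofReal_mul_I, Complex.norm_I, mul_one, mul_one,
    Complex.norm_real, Real.norm_eq_abs, abs_div, abs_of_pos hω, div_mul_eq_mul_div]
  gcongr
  exact hf.trans (by gcongr; exact abs_le_norm_complexAmplitude z)

variable (hω : 0 < ω) (hM : 0 ≤ M) (hy : ∀ z, HasDerivAt y (yd z) z)
  (hyd : ∀ z, HasDerivAt yd (-ω ^ 2 * y z + f z) z) (hf : ∀ z ∈ Icc 0 T, |f z| ≤ M * |y z|)
include hω hM hy hyd hf

theorem norm_complexAmplitude_le_mul_exp :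
    ∀ z ∈ Icc 0 T, ‖complexAmplitude ω y yd z‖ ≤
      ‖complexAmplitude ω y yd 0‖ * Real.exp (M / ω * z) := by
  have hA z := hasDerivAt_complexAmplitude hω.ne' (hy z) (hyd z)
  intro z hz
  simpa [gronwallBound_ε0] using norm_le_gronwallBound_of_norm_deriv_right_le
    (fun x _ => (hA x).continuousAt.continuousWithinAt) (fun x _ => (hA x).hasDerivWithinAt)
    le_rfl (fun x hx => (norm_deriv_complexAmplitude_le hω hM
      (hf x (Ico_subset_Icc_self hx))).trans_eq (add_zero _).symm) z hz

theorem norm_complexAmplitude_sub_le :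
    ∀ z ∈ Icc 0 T, ‖complexAmplitude ω y yd z - complexAmplitude ω y yd 0‖ ≤
      M / ω * ‖complexAmplitude ω y yd 0‖ * Real.exp (M / ω * T) * z := by
  have hA z := hasDerivAt_complexAmplitude hω.ne' (hy z) (hyd z)
  intro z hz
  simpa using norm_image_sub_le_of_norm_deriv_le_segment' (fun x _ => (hA x).hasDerivWithinAt)
    (fun x hx => calc
      _ ≤ M / ω * ‖complexAmplitude ω y yd x‖ :=
        norm_deriv_complexAmplitude_le hω hM (hf x (Ico_subset_Icc_self hx))
      _ ≤ M / ω * (‖complexAmplitude ω y yd 0‖ * Real.exp (M / ω * x)) := by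
        gcongr
        exact norm_complexAmplitude_le_mul_exp hω hM hy hyd hf x (Ico_subset_Icc_self hx)
      _ ≤ M / ω * ‖complexAmplitude ω y yd 0‖ * Real.exp (M / ω * T) := by
        rw [← mul_assoc]; gcongr; exact hx.2.le) z hz

theorem abs_sub_free_oscillation_le {z : ℝ} (hz : z ∈ Icc 0 T) :
    |y z - (y 0 * cos (ω * z) + yd 0 / ω * sin (ω * z))| ≤
        M / ω * ‖complexAmplitude ω y yd 0‖ * Real.exp (M / ω * T) * T ∧
      |yd z / ω - (yd 0 / ω * cos (ω * z) - y 0 * sin (ω * z))| ≤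
        M / ω * ‖complexAmplitude ω y yd 0‖ * Real.exp (M / ω * T) * T := by
  have hdiff : ‖complexAmplitude ω y yd z - complexAmplitude ω y yd 0‖ ≤
      M / ω * ‖complexAmplitude ω y yd 0‖ * Real.exp (M / ω * T) * T :=
    (norm_complexAmplitude_sub_le hω hM hy hyd hf z hz).trans (by gcongr; exact hz.2)
  have hrot := congrArg norm (complexAmplitude_sub_mul_exp (y := y) (yd := yd) (ω := ω) z)
  rw [norm_mul, ← neg_mul, ← Complex.ofReal_neg, Complex.norm_exp_ofReal_mul_I, mul_one] at hrot
  rw [hrot, ← Complex.mk_eq_add_mul_I] at hdiff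
  exact ⟨(Complex.abs_re_le_norm _).trans hdiff, (Complex.abs_im_le_norm _).trans hdiff⟩

end ForcedOscillator

theorem tendstoUniformlyOn_zero_of_abs_le {ι α : Type*} {l : Filter ι} {s : Set α}
    {F : ι → α → ℝ} {B : ι → ℝ} (hB : Tendsto B l (𝓝 0)) (hF : ∀ᶠ i in l, ∀ x ∈ s, |F i x| ≤ B i) :
    TendstoUniformlyOn F (fun _ => 0) l s := by
  rw [Metric.tendstoUniformlyOn_iff]
  intro ε hε
  filter_upwards [hF, hB.eventually (eventually_lt_nhds hε)] with i hi hiε x hx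
  rw [dist_zero_left, Real.norm_eq_abs]
  exact (hi x hx).trans_lt hiε

theorem tendsto_wkb_error_atBot (M T : ℝ) :
    Tendsto (fun ν : ℝ => M / √(-ν) * Real.exp (M / √(-ν) * T) * T) atBot (𝓝 0) := by
  have hK : Tendsto (fun ν : ℝ => M / √(-ν)) atBot (𝓝 0) :=
    tendsto_const_nhds.div_atTop (tendsto_sqrt_atTop.comp tendsto_neg_atBot_atTop)
  have hg : Continuous fun k : ℝ => k * Real.exp (k * T) * T := by fun_prop
  simpa [Function.comp_def] using (hg.tendsto 0).comp hK

theorem IsHillFundamental.abs_sub_wkb_le {P : ℝ → ℝ} {y1 y1d y2 y2d : ℝ → ℝ → ℝ}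
    (hfund : IsHillFundamental P y1 y1d y2 y2d) {M T : ℝ} (hM : 0 ≤ M)
    (hP : ∀ z ∈ Icc 0 T, |P z| ≤ M) {ν : ℝ} (hν : ν < 0) {z : ℝ} (hz : z ∈ Icc 0 T) :
    |y1 ν z - cos (√(-ν) * z)| ≤ M / √(-ν) * Real.exp (M / √(-ν) * T) * T ∧
    |√(-ν) * y2 ν z - sin (√(-ν) * z)| ≤ M / √(-ν) * Real.exp (M / √(-ν) * T) * T ∧
    |y1d ν z / √(-ν) + sin (√(-ν) * z)| ≤ M / √(-ν) * Real.exp (M / √(-ν) * T) * T ∧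
    |y2d ν z - cos (√(-ν) * z)| ≤ M / √(-ν) * Real.exp (M / √(-ν) * T) * T := by
  obtain ⟨hy1, hy1d, hy2, hy2d, h1, h1d, h2, h2d⟩ := hfund ν
  set ω := √(-ν)
  have hω : 0 < ω := Real.sqrt_pos.2 (neg_pos.2 hν)
  have hω2 : ω ^ 2 = -ν := Real.sq_sqrt (neg_nonneg.2 hν.le)
  have hforce (y : ℝ → ℝ) : ∀ z ∈ Icc 0 T, |-(P z * y z)| ≤ M * |y z| := fun z hz => by
    rw [abs_neg, abs_mul]
    gcongr
    exact hP z hz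
  obtain ⟨e1, e1d⟩ := abs_sub_free_oscillation_le (f := fun z => -(P z * y1 ν z)) hω hM hy1
    (fun z => (hy1d z).congr_deriv (by rw [hω2]; ring)) (hforce _) hz
  -- `ω * y2` has initial amplitude `i`, of norm one like that of `y1`.
  obtain ⟨e2, e2d⟩ := abs_sub_free_oscillation_le (f := fun z => -(P z * (ω * y2 ν z))) hω hM
    (fun z => (hy2 z).const_mul ω) (fun z => ((hy2d z).const_mul ω).congr_deriv (by rw [hω2]; ring))
    (hforce _) hz
  simp only [complexAmplitude_zero, h1, h1d, h2, h2d, mul_zero, mul_one, one_mul, zero_mul,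
    zero_div, div_self hω.ne', mul_div_cancel_left₀ _ hω.ne', add_zero, zero_add, sub_zero,
    zero_sub, sub_neg_eq_add, Complex.ofReal_one, Complex.ofReal_zero, norm_one,
    Complex.norm_I] at e1 e1d e2 e2d
  exact ⟨e1, e2, e1d, e2d⟩

theorem hill_wkb_asymptotics_general
    (T : ℝ)
    (P : ℝ → ℝ) (hPcont : Continuous P)
    (y1 y1d y2 y2d : ℝ → ℝ → ℝ)
    (hfund : IsHillFundamental P y1 y1d y2 y2d)
 :
    TendstoUniformlyOn (fun (ν : ℝ) (z : ℝ) => y1 ν z - Real.cos (Real.sqrt (-ν) * z))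
      (fun _ => (0 : ℝ)) Filter.atBot (Set.Icc 0 T) ∧
    TendstoUniformlyOn (fun (ν : ℝ) (z : ℝ) =>
        Real.sqrt (-ν) * y2 ν z - Real.sin (Real.sqrt (-ν) * z))
      (fun _ => (0 : ℝ)) Filter.atBot (Set.Icc 0 T) ∧
    TendstoUniformlyOn (fun (ν : ℝ) (z : ℝ) =>
        y1d ν z / Real.sqrt (-ν) + Real.sin (Real.sqrt (-ν) * z))
      (fun _ => (0 : ℝ)) Filter.atBot (Set.Icc 0 T) ∧
    TendstoUniformlyOn (fun (ν : ℝ) (z : ℝ) => y2d ν z - Real.cos (Real.sqrt (-ν) * z))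
      (fun _ => (0 : ℝ)) Filter.atBot (Set.Icc 0 T) := by
  obtain ⟨M, hM⟩ := isCompact_Icc.exists_bound_of_continuousOn (hPcont.continuousOn (s := Icc 0 T))
  have hP : ∀ z ∈ Icc 0 T, |P z| ≤ max M 0 := fun z hz => (hM z hz).trans (le_max_left M 0)
  have hwkb {ν : ℝ} (hν : ν < 0) {z : ℝ} (hz : z ∈ Icc 0 T) :=
    hfund.abs_sub_wkb_le (le_max_right M 0) hP hν hz
  have hB := tendsto_wkb_error_atBot (max M 0) T
  refine ⟨?_, ?_, ?_, ?_⟩ <;> refine tendstoUniformlyOn_zero_of_abs_le hB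
    ((eventually_lt_atBot 0).mono fun ν hν z hz => ?_)
  exacts [(hwkb hν hz).1, (hwkb hν hz).2.1, (hwkb hν hz).2.2.1, (hwkb hν hz).2.2.2]

theorem hill_wkb_asymptotics
    (T : ℝ) (hT : 0 < T)
    (P : ℝ → ℝ) (hPcont : Continuous P) (hPper : ∀ z, P (z + T) = P z)
    (y1 y1d y2 y2d : ℝ → ℝ → ℝ)
    (hfund : IsHillFundamental P y1 y1d y2 y2d)
    (Δ : ℝ → ℝ) (hΔ : Δ = fun ν => y1 ν T + y2d ν T)
 :
    TendstoUniformlyOn (fun (ν : ℝ) (z : ℝ) => y1 ν z - Real.cos (Real.sqrt (-ν) * z))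
      (fun _ => (0 : ℝ)) Filter.atBot (Set.Icc 0 T) ∧
    TendstoUniformlyOn (fun (ν : ℝ) (z : ℝ) =>
        Real.sqrt (-ν) * y2 ν z - Real.sin (Real.sqrt (-ν) * z))
      (fun _ => (0 : ℝ)) Filter.atBot (Set.Icc 0 T) ∧
    TendstoUniformlyOn (fun (ν : ℝ) (z : ℝ) =>
        y1d ν z / Real.sqrt (-ν) + Real.sin (Real.sqrt (-ν) * z))
      (fun _ => (0 : ℝ)) Filter.atBot (Set.Icc 0 T) ∧
    TendstoUniformlyOn (fun (ν : ℝ) (z : ℝ) => y2d ν z - Real.cos (Real.sqrt (-ν) * z))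
      (fun _ => (0 : ℝ)) Filter.atBot (Set.Icc 0 T) :=
  hill_wkb_asymptotics_general T P hPcont y1 y1d y2 y2d hfund
end
end

section
/- Let c ∈ ℝ with c² ≠ 1, T > 0, λ ∈ ℂ, and let Q : ℝ → ℝ be continuous. Let w₁, w₂ : ℝ → ℂ be the unique solutions of the spectral problem (c²−1)w'' − 2cλw' + (λ² + Q(z))w = 0 with w₁(0) = 1, w₁'(0) = 0, w₂(0) = 0, w₂'(0) = 1, and let y₁, y₂ : ℝ → ℂ be the unique solutions of Hill's equation y'' + (Q(z)/(c²−1))y = ν y, with ν := (λ/(c²−1))², satisfying y₁(0) = 1, y₁'(0) = 0, y₂(0) = 0, y₂'(0) = 1. Then w₁(T) + w₂'(T) = e^{cλT/(c²−1)}·(y₁(T) + y₂'(T)); that is, the trace of the monodromy matrix of the spectral problem equals e^{cλT/(c²−1)} times the Hill discriminant evaluated at ν. -/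
/-!
With `α = cλ/(c²-1)`, the gauge transformation `w = e^{αz} h` turns the Klein–Gordon spectral
problem into Hill's equation `h'' = (ν - Q/(c²-1)) h`. Constancy of Wronskians expresses every
solution of Hill's equation through `y₁, y₂` by its Cauchy data at `0`. The transforms of `w₁, w₂`
have data `(1, -α)` and `(0, 1)`, and the term `-α y₂` coming from `w₁` cancels the term `α y₂`
that the gauge adds to `w₂'`, leaving `w₁(T) + w₂'(T) = e^{αT} (y₁(T) + y₂'(T))`.
-/

open Real Filter Set

noncomputable section

-- Hill's equation `u'' + P u = ν u`, written as `u'' = q u` with `q = ν - P`.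
structure IsHillSolution (q : ℝ → ℂ) (u u' : ℝ → ℂ) : Prop where
  hasDerivAt : ∀ z, HasDerivAt u (u' z) z
  hasDerivAt_deriv : ∀ z, HasDerivAt u' (q z * u z) z

namespace IsHillSolution

variable {q : ℝ → ℂ} {u u' v v' : ℝ → ℂ}

theorem wronskian_eq (hu : IsHillSolution q u u') (hv : IsHillSolution q v v') (a b : ℝ) :
    u a * v' a - u' a * v a = u b * v' b - u' b * v b := by
  have hW : ∀ z, HasDerivAt (fun t => u t * v' t - u' t * v t) 0 z := fun z =>
    (((hu.hasDerivAt z).mul (hv.hasDerivAt_deriv z)).sub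
      ((hu.hasDerivAt_deriv z).mul (hv.hasDerivAt z))).congr_deriv (by ring)
  exact is_const_of_deriv_eq_zero (fun z => (hW z).differentiableAt) (fun z => (hW z).deriv) a b

theorem eq_add_of_fundamental {y₁ y₁' y₂ y₂' : ℝ → ℂ} (hu : IsHillSolution q u u')
    (hy₁ : IsHillSolution q y₁ y₁') (hy₂ : IsHillSolution q y₂ y₂')
    (hy₁0 : y₁ 0 = 1) (hy₁'0 : y₁' 0 = 0) (hy₂0 : y₂ 0 = 0) (hy₂'0 : y₂' 0 = 1) (z : ℝ) :
    u z = u 0 * y₁ z + u' 0 * y₂ z ∧ u' z = u 0 * y₁' z + u' 0 * y₂' z := by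
  have W₁₂ := hy₁.wronskian_eq hy₂ z 0
  have Wu₂ := hu.wronskian_eq hy₂ z 0
  have W₁u := hy₁.wronskian_eq hu z 0
  simp only [hy₁0, hy₁'0, hy₂0, hy₂'0, mul_one, mul_zero, one_mul, zero_mul, sub_zero]
    at W₁₂ Wu₂ W₁u
  constructor
  · linear_combination y₁ z * Wu₂ + y₂ z * W₁u - u z * W₁₂
  · linear_combination y₁' z * Wu₂ + y₂' z * W₁u - u' z * W₁₂

end IsHillSolution

theorem hasDerivAt_cexp_mul_ofReal (β : ℂ) (z : ℝ) :
    HasDerivAt (fun t : ℝ => Complex.exp (β * t)) (Complex.exp (β * z) * β) z := by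
  simpa using ((hasDerivAt_id z).ofReal_comp.const_mul β).cexp

theorem isHillSolution_cexp_neg_mul {q : ℝ → ℂ} {α : ℂ} {w w' w'' : ℝ → ℂ}
    (hw : ∀ z, HasDerivAt w (w' z) z) (hw' : ∀ z, HasDerivAt w' (w'' z) z)
    (hode : ∀ z, w'' z - 2 * α * w' z + α ^ 2 * w z = q z * w z) :
    IsHillSolution q (fun t => Complex.exp (-α * t) * w t)
      (fun t => Complex.exp (-α * t) * (w' t - α * w t)) where
  hasDerivAt z := ((hasDerivAt_cexp_mul_ofReal (-α) z).mul (hw z)).congr_deriv (by ring)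
  hasDerivAt_deriv z :=
    ((hasDerivAt_cexp_mul_ofReal (-α) z).mul ((hw' z).sub ((hw z).const_mul α))).congr_deriv
      (by
        simp only [Pi.sub_apply]
        linear_combination Complex.exp (-α * z) * hode z)

theorem kleinGordon_eq_hill_form {c lam a w w' w'' : ℂ} (hc : c ^ 2 - 1 ≠ 0)
    (h : (c ^ 2 - 1) * w'' - 2 * c * lam * w' + (lam ^ 2 + a) * w = 0) :
    w'' - 2 * (c * lam / (c ^ 2 - 1)) * w' + (c * lam / (c ^ 2 - 1)) ^ 2 * w
      = ((lam / (c ^ 2 - 1)) ^ 2 - a / (c ^ 2 - 1)) * w := by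
  field_simp
  linear_combination (c ^ 2 - 1) * h

theorem monodromy_trace_relation_general
    (c : ℝ) (hc : c ^ 2 ≠ 1) (T : ℝ) (lam : ℂ)
    (Q : ℝ → ℝ)
    (ν : ℂ) (hν : ν = (lam / ((c : ℂ) ^ 2 - 1)) ^ 2)
    (w1 w1d w1dd w2 w2d w2dd : ℝ → ℂ)
    (hw1 : ∀ z, HasDerivAt w1 (w1d z) z) (hw1d : ∀ z, HasDerivAt w1d (w1dd z) z)
    (hw2 : ∀ z, HasDerivAt w2 (w2d z) z) (hw2d : ∀ z, HasDerivAt w2d (w2dd z) z)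
    (hw1ode : ∀ z : ℝ, ((c : ℂ) ^ 2 - 1) * w1dd z - 2 * (c : ℂ) * lam * w1d z
        + (lam ^ 2 + (Q z : ℂ)) * w1 z = 0)
    (hw2ode : ∀ z : ℝ, ((c : ℂ) ^ 2 - 1) * w2dd z - 2 * (c : ℂ) * lam * w2d z
        + (lam ^ 2 + (Q z : ℂ)) * w2 z = 0)
    (hw1i : w1 0 = 1) (hw1di : w1d 0 = 0) (hw2i : w2 0 = 0) (hw2di : w2d 0 = 1)
    (y1 y1d y2 y2d : ℝ → ℂ)
    (hy1 : ∀ z, HasDerivAt y1 (y1d z) z)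
    (hy1d : ∀ z : ℝ, HasDerivAt y1d (ν * y1 z - ((Q z : ℂ) / ((c : ℂ) ^ 2 - 1)) * y1 z) z)
    (hy2 : ∀ z, HasDerivAt y2 (y2d z) z)
    (hy2d : ∀ z : ℝ, HasDerivAt y2d (ν * y2 z - ((Q z : ℂ) / ((c : ℂ) ^ 2 - 1)) * y2 z) z)
    (hy1i : y1 0 = 1) (hy1di : y1d 0 = 0) (hy2i : y2 0 = 0) (hy2di : y2d 0 = 1)
 :
    w1 T + w2d T = Complex.exp ((c : ℂ) * lam * (T : ℂ) / ((c : ℂ) ^ 2 - 1))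
        * (y1 T + y2d T) := by
  have hs : (c : ℂ) ^ 2 - 1 ≠ 0 := sub_ne_zero.mpr (by exact_mod_cast hc)
  set α := (c : ℂ) * lam / ((c : ℂ) ^ 2 - 1)
  set q : ℝ → ℂ := fun z => ν - (Q z : ℂ) / ((c : ℂ) ^ 2 - 1)
  have hY₁ : IsHillSolution q y1 y1d := ⟨hy1, fun z => (hy1d z).congr_deriv (sub_mul ..).symm⟩
  have hY₂ : IsHillSolution q y2 y2d := ⟨hy2, fun z => (hy2d z).congr_deriv (sub_mul ..).symm⟩
  have hH₁ := isHillSolution_cexp_neg_mul (q := q) hw1 hw1d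
    (fun z => hν ▸ kleinGordon_eq_hill_form hs (hw1ode z))
  have hH₂ := isHillSolution_cexp_neg_mul (q := q) hw2 hw2d
    (fun z => hν ▸ kleinGordon_eq_hill_form hs (hw2ode z))
  obtain ⟨E₁, -⟩ := hH₁.eq_add_of_fundamental hY₁ hY₂ hy1i hy1di hy2i hy2di T
  obtain ⟨E₂, E₂'⟩ := hH₂.eq_add_of_fundamental hY₁ hY₂ hy1i hy1di hy2i hy2di T
  simp only [Complex.ofReal_zero, mul_zero, Complex.exp_zero, one_mul, hw1i, hw1di, hw2i, hw2di,
    zero_sub, sub_zero, zero_mul, zero_add] at E₁ E₂ E₂'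
  have hαT : (c : ℂ) * lam * T / ((c : ℂ) ^ 2 - 1) = -(-α * T) := by ring
  rw [hαT, Complex.exp_neg, ← inv_mul_eq_iff_eq_mul₀ (inv_ne_zero (Complex.exp_ne_zero _)), inv_inv]
  linear_combination E₁ + E₂' + α * E₂

theorem monodromy_trace_relation
    (c : ℝ) (hc : c ^ 2 ≠ 1) (T : ℝ) (hT : 0 < T) (lam : ℂ)
    (Q : ℝ → ℝ) (hQ : Continuous Q)
    (ν : ℂ) (hν : ν = (lam / ((c : ℂ) ^ 2 - 1)) ^ 2)
    (w1 w1d w1dd w2 w2d w2dd : ℝ → ℂ)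
    (hw1 : ∀ z, HasDerivAt w1 (w1d z) z) (hw1d : ∀ z, HasDerivAt w1d (w1dd z) z)
    (hw2 : ∀ z, HasDerivAt w2 (w2d z) z) (hw2d : ∀ z, HasDerivAt w2d (w2dd z) z)
    (hw1ode : ∀ z : ℝ, ((c : ℂ) ^ 2 - 1) * w1dd z - 2 * (c : ℂ) * lam * w1d z
        + (lam ^ 2 + (Q z : ℂ)) * w1 z = 0)
    (hw2ode : ∀ z : ℝ, ((c : ℂ) ^ 2 - 1) * w2dd z - 2 * (c : ℂ) * lam * w2d z
        + (lam ^ 2 + (Q z : ℂ)) * w2 z = 0)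
    (hw1i : w1 0 = 1) (hw1di : w1d 0 = 0) (hw2i : w2 0 = 0) (hw2di : w2d 0 = 1)
    (y1 y1d y2 y2d : ℝ → ℂ)
    (hy1 : ∀ z, HasDerivAt y1 (y1d z) z)
    (hy1d : ∀ z : ℝ, HasDerivAt y1d (ν * y1 z - ((Q z : ℂ) / ((c : ℂ) ^ 2 - 1)) * y1 z) z)
    (hy2 : ∀ z, HasDerivAt y2 (y2d z) z)
    (hy2d : ∀ z : ℝ, HasDerivAt y2d (ν * y2 z - ((Q z : ℂ) / ((c : ℂ) ^ 2 - 1)) * y2 z) z)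
    (hy1i : y1 0 = 1) (hy1di : y1d 0 = 0) (hy2i : y2 0 = 0) (hy2di : y2d 0 = 1)
 :
    w1 T + w2d T = Complex.exp ((c : ℂ) * lam * (T : ℂ) / ((c : ℂ) ^ 2 - 1))
        * (y1 T + y2d T) :=
  monodromy_trace_relation_general c hc T lam Q ν hν w1 w1d w1dd w2 w2d w2dd hw1 hw1d hw2 hw2d
    hw1ode hw2ode hw1i hw1di hw2i hw2di y1 y1d y2 y2d hy1 hy1d hy2 hy2d hy1i hy1di hy2i hy2di
end
end

section
/- Let c, T ∈ ℝ with c² ≠ 1 and T > 0, and let Δ be a complex-analytic function on a neighborhood of 0 in ℂ with Δ(0) = 2. Define g(λ) := e^{2λcT/(c²−1)} − e^{λcT/(c²−1)}·Δ(λ²/(c²−1)²) + 1 (when Δ is the Hill discriminant of a periodic traveling wave, g equals the periodic Evans function D(λ,1) = det(M(λ) − I), where M(λ) is the monodromy matrix of the linearized Klein–Gordon spectral problem). Then g(0) = 0, g'(0) = 0, and g''(0) = 2(c²T² − Δ'(0))/(c²−1)²; equivalently, g(λ) = ((c²T² − Δ'(0))/(c²−1)²)·λ² + O(λ³) as λ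 → 0. -/
/-
Write a = cT/(c² − 1) and b = (c² − 1)⁻², so that g(λ) = e^{2aλ} − e^{aλ} Δ(bλ²) + 1.
Because λ ↦ bλ² has a critical point at 0, the order-two Faà di Bruno formula gives
(Δ(bλ²))'' = 2bΔ'(0) at 0 with no Δ''-term; Leibniz's rule for e^{aλ} Δ(bλ²) then
yields g''(0) = a²(4 − Δ(0)) − 2bΔ'(0) = 2a² − 2bΔ'(0).
-/

open Real Filter Set

noncomputable section

section
variable {𝕜 : Type*} [NontriviallyNormedField 𝕜] {Δ : 𝕜 → 𝕜} (b : 𝕜)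

lemma deriv_comp_const_mul_sq_zero (hΔ : DifferentiableAt 𝕜 Δ 0) :
    deriv (fun l => Δ (b * l ^ 2)) 0 = 0 := by
  have := deriv_comp (h := fun l : 𝕜 => b * l ^ 2) (0 : 𝕜) (by simpa using hΔ) (by fun_prop)
  simpa [Function.comp_def] using this

lemma iteratedDeriv_two_comp_const_mul_sq_zero (hΔ : ContDiffAt 𝕜 2 Δ 0) :
    iteratedDeriv 2 (fun l => Δ (b * l ^ 2)) 0 = 2 * b * deriv Δ 0 := by
  have := iteratedDeriv_comp_two (f := fun l : 𝕜 => b * l ^ 2) (x := 0) (by simpa using hΔ)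
    (by fun_prop)
  simpa [Function.comp_def, mul_comm, mul_left_comm] using this

end

section
variable {h : ℂ → ℂ} {x : ℂ} (a : ℂ)

lemma deriv_cexp_const_mul_mul (hh : DifferentiableAt ℂ h x) :
    deriv (fun l => Complex.exp (a * l) * h l) x = Complex.exp (a * x) * (a * h x + deriv h x) := by
  rw [deriv_fun_mul (by fun_prop) hh, deriv_cexp (by fun_prop), deriv_const_mul_field', deriv_id'']
  ring

lemma iteratedDeriv_two_cexp_const_mul_mul (hh : ContDiffAt ℂ 2 h x) :
    iteratedDeriv 2 (fun l => Complex.exp (a * l) * h l) x =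
      Complex.exp (a * x) * (a ^ 2 * h x + 2 * a * deriv h x + iteratedDeriv 2 h x) := by
  rw [iteratedDeriv_fun_mul (by fun_prop) hh]
  simp only [Finset.sum_range_succ, Finset.range_one, Finset.sum_singleton, Nat.choose_zero_right,
    Nat.choose_succ_self_right, Nat.choose_self, Nat.reduceAdd, Nat.add_one_sub_one, tsub_zero,
    tsub_self, Nat.cast_one, Nat.cast_ofNat, iteratedDeriv_zero, iteratedDeriv_one,
    iteratedDeriv_cexp_const_mul, pow_zero, pow_one, one_mul]
  ring

end

def evansOfDiscriminant (a b : ℂ) (Δ : ℂ → ℂ) (l : ℂ) : ℂ :=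
  Complex.exp (2 * a * l) - Complex.exp (a * l) * Δ (b * l ^ 2) + 1

section
variable {Δ : ℂ → ℂ} (a b : ℂ)

lemma evansOfDiscriminant_zero : evansOfDiscriminant a b Δ 0 = 2 - Δ 0 := by
  simp only [evansOfDiscriminant, mul_zero, zero_pow two_ne_zero, Complex.exp_zero, one_mul]
  ring

lemma deriv_evansOfDiscriminant_zero (hΔ : DifferentiableAt ℂ Δ 0) :
    deriv (evansOfDiscriminant a b Δ) 0 = a * (2 - Δ 0) := by
  have hΔφ : DifferentiableAt ℂ (fun l => Δ (b * l ^ 2)) 0 := by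
    replace hΔ : DifferentiableAt ℂ Δ (b * 0 ^ 2) := by simpa using hΔ
    fun_prop
  have hprod : DifferentiableAt ℂ (fun l => Complex.exp (a * l) * Δ (b * l ^ 2)) 0 :=
    DifferentiableAt.mul (by fun_prop) hΔφ
  unfold evansOfDiscriminant
  rw [deriv_add_const, deriv_fun_sub (by fun_prop) hprod, deriv_cexp (by fun_prop),
    deriv_const_mul_field', deriv_id'', deriv_cexp_const_mul_mul a hΔφ,
    deriv_comp_const_mul_sq_zero b hΔ]
  simp only [mul_zero, zero_pow two_ne_zero, Complex.exp_zero, mul_one, one_mul, add_zero]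
  ring

lemma iteratedDeriv_two_evansOfDiscriminant_zero (hΔ : ContDiffAt ℂ 2 Δ 0) :
    iteratedDeriv 2 (evansOfDiscriminant a b Δ) 0 = a ^ 2 * (4 - Δ 0) - 2 * b * deriv Δ 0 := by
  have hΔφ : ContDiffAt ℂ 2 (fun l => Δ (b * l ^ 2)) 0 := by
    replace hΔ : ContDiffAt ℂ 2 Δ (b * 0 ^ 2) := by simpa using hΔ
    fun_prop
  have hprod : ContDiffAt ℂ 2 (fun l => Complex.exp (a * l) * Δ (b * l ^ 2)) 0 :=
    ContDiffAt.mul (by fun_prop) hΔφ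
  unfold evansOfDiscriminant
  rw [iteratedDeriv_fun_add (ContDiffAt.sub (by fun_prop) hprod) (by fun_prop),
    iteratedDeriv_fun_sub (by fun_prop) hprod, iteratedDeriv_two_cexp_const_mul_mul a hΔφ,
    iteratedDeriv_two_comp_const_mul_sq_zero b hΔ,
    deriv_comp_const_mul_sq_zero b (hΔ.differentiableAt (by norm_num))]
  simp only [iteratedDeriv_cexp_const_mul, iteratedDeriv_const, mul_zero, zero_pow two_ne_zero,
    Complex.exp_zero, mul_one, one_mul, add_zero, OfNat.ofNat_ne_zero, if_false]
  ring

end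

theorem periodic_evans_function_expansion_general
    (c T : ℝ)
    (Δ : ℂ → ℂ) (hΔ : AnalyticAt ℂ Δ 0) (hΔ0 : Δ 0 = 2)
    (g : ℂ → ℂ)
    (hg : g = fun lam : ℂ =>
      Complex.exp (2 * lam * (c : ℂ) * (T : ℂ) / ((c : ℂ) ^ 2 - 1))
        - Complex.exp (lam * (c : ℂ) * (T : ℂ) / ((c : ℂ) ^ 2 - 1))
            * Δ (lam ^ 2 / ((c : ℂ) ^ 2 - 1) ^ 2) + 1) :
    g 0 = 0 ∧ deriv g 0 = 0 ∧
      deriv (deriv g) 0 = 2 * ((c : ℂ) ^ 2 * (T : ℂ) ^ 2 - deriv Δ 0) / ((c : ℂ) ^ 2 - 1) ^ 2 := by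
  have hg_rescaled :
      g = evansOfDiscriminant (c * T / ((c : ℂ) ^ 2 - 1)) (((c : ℂ) ^ 2 - 1) ^ 2)⁻¹ Δ := by
    funext l
    rw [hg, evansOfDiscriminant]
    ring_nf
  refine ⟨?_, ?_, ?_⟩
  · rw [hg_rescaled, evansOfDiscriminant_zero, hΔ0, sub_self]
  · rw [hg_rescaled, deriv_evansOfDiscriminant_zero _ _ hΔ.differentiableAt, hΔ0, sub_self,
      mul_zero]
  · rw [← iteratedDeriv_one, ← iteratedDeriv_succ', hg_rescaled,
      iteratedDeriv_two_evansOfDiscriminant_zero _ _ hΔ.contDiffAt, hΔ0, div_pow]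
    ring

theorem periodic_evans_function_expansion
    (c T : ℝ) (hc : c ^ 2 ≠ 1) (hT : 0 < T)
    (Δ : ℂ → ℂ) (hΔ : AnalyticAt ℂ Δ 0) (hΔ0 : Δ 0 = 2)
    (g : ℂ → ℂ)
    (hg : g = fun lam : ℂ =>
      Complex.exp (2 * lam * (c : ℂ) * (T : ℂ) / ((c : ℂ) ^ 2 - 1))
        - Complex.exp (lam * (c : ℂ) * (T : ℂ) / ((c : ℂ) ^ 2 - 1))
            * Δ (lam ^ 2 / ((c : ℂ) ^ 2 - 1) ^ 2) + 1) :
    g 0 = 0 ∧ deriv g 0 = 0 ∧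
      deriv (deriv g) 0 = 2 * ((c : ℂ) ^ 2 * (T : ℂ) ^ 2 - deriv Δ 0) / ((c : ℂ) ^ 2 - 1) ^ 2 :=
  periodic_evans_function_expansion_general c T Δ hΔ hΔ0 g hg
end
end
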